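/- arXiv:2201.09000 — 2 statements merged into one kernel-verified Lean document; each statement's English description precedes it below -/
import Mathlib

section
/- For f^L(x)=x₁²+(x₁x₂−1)² and f^U(x)=2x₁²+(x₁x₂−1)² on ℝ², there is no exact (type-2 weakly) Pareto optimal point: for every x*∈ℝ² there exists x∈ℝ² with f^L(x)<f^L(x*) and f^U(x)<f^U(x*). -/
/-!
Both objectives are positive everywhere: `f^L(x) = 0` would force `x₁ = 0` and `x₁ x₂ = 1` at
once. Along the hyperbola `x = (t, 1/t)` the coupling term vanishes, so `f^L = t²` and
`f^U = 2 t²`, which tend to `0` as `t → 0`; hence any point is strictly dominated in both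
objectives by a point of the hyperbola close enough to the `x₂`-axis.
-/

open Filter Topology

def lowerObjective (x : ℝ × ℝ) : ℝ := x.1 ^ 2 + (x.1 * x.2 - 1) ^ 2

def upperObjective (x : ℝ × ℝ) : ℝ := 2 * x.1 ^ 2 + (x.1 * x.2 - 1) ^ 2

theorem lowerObjective_pos (x : ℝ × ℝ) : 0 < lowerObjective x := by
  unfold lowerObjective
  rcases eq_or_ne x.1 0 with h | h
  · simp [h]
  · positivity

theorem lowerObjective_le_upperObjective (x : ℝ × ℝ) : lowerObjective x ≤ upperObjective x := by
  unfold lowerObjective upperObjective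
  nlinarith [sq_nonneg x.1]

theorem upperObjective_pos (x : ℝ × ℝ) : 0 < upperObjective x :=
  (lowerObjective_pos x).trans_le (lowerObjective_le_upperObjective x)

theorem tendsto_nhdsNE_zero_const_mul_sq (c : ℝ) :
    Tendsto (fun t : ℝ ↦ c * t ^ 2) (𝓝[≠] 0) (𝓝 0) := by
  have h : Tendsto (fun t : ℝ ↦ c * t ^ 2) (𝓝 0) (𝓝 (c * 0 ^ 2)) :=
    (continuous_const.mul (continuous_pow 2)).tendsto 0
  simpa using h.mono_left nhdsWithin_le_nhds

theorem tendsto_lowerObjective_hyperbola :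
    Tendsto (fun t : ℝ ↦ lowerObjective (t, t⁻¹)) (𝓝[≠] 0) (𝓝 0) := by
  refine (tendsto_nhdsNE_zero_const_mul_sq 1).congr' ?_
  filter_upwards [self_mem_nhdsWithin] with t (ht : t ≠ 0)
  simp [lowerObjective, ht]

theorem tendsto_upperObjective_hyperbola :
    Tendsto (fun t : ℝ ↦ upperObjective (t, t⁻¹)) (𝓝[≠] 0) (𝓝 0) := by
  refine (tendsto_nhdsNE_zero_const_mul_sq 2).congr' ?_
  filter_upwards [self_mem_nhdsWithin] with t (ht : t ≠ 0)
  simp [upperObjective, ht]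

/-- Example 3.1: the problem has no exact (type-2 weakly) Pareto optimal point: every
x* ∈ ℝ² is strictly dominated in both components. -/
theorem no_exact_weak_pareto :
    ∀ xstar : ℝ × ℝ, ∃ x : ℝ × ℝ,
      x.1 ^ 2 + (x.1 * x.2 - 1) ^ 2 < xstar.1 ^ 2 + (xstar.1 * xstar.2 - 1) ^ 2 ∧
      2 * x.1 ^ 2 + (x.1 * x.2 - 1) ^ 2 < 2 * xstar.1 ^ 2 + (xstar.1 * xstar.2 - 1) ^ 2 := by
  intro xstar
  have hL := tendsto_lowerObjective_hyperbola.eventually (gt_mem_nhds (lowerObjective_pos xstar))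
  have hU := tendsto_upperObjective_hyperbola.eventually (gt_mem_nhds (upperObjective_pos xstar))
  obtain ⟨t, hLt, hUt⟩ := (hL.and hU).exists
  exact ⟨(t, t⁻¹), hLt, hUt⟩
end

section
/- Finite-dimensional weak duality (abstract form): Let x,y∈Ω⊆ℝⁿ, let λ_i^L,λ_i^U≥0 with Σ_i(λ_i^L+λ_i^U)=1, μ_t≥0 with μ_t=0 for all but finitely many t. Suppose there exist vectors z_i^{*L}, z_i^{*U} (i∈I), x_t^* (t∈T), b* with ‖b*‖≤1, and ω*∈N(y;Ω) such that Σ_i(λ_i^L z_i^{*L}+λ_i^U z_i^{*U}) + Σ_t μ_t x_t^* + Σ_i(λ_i^L ε_i^U+λ_i^U ε_i^L) b* = −ω*. Suppose further g_t(x)≤0 and μ_t g_t(y)≥0 for all t, and that there exists ν in the polar of N(y;Ω) such that: for all i, (⟨z_i^{*L},ν⟩+ε_i^U‖x−y‖≥0 ⟹ f_i^L(x)≥f_i^L(y)−ε_i^U‖x−y‖) and (⟨z_i^{*U},ν⟩+ε_i^L‖x−y‖≥0 ⟹ f_i^U(x)≥f_i^U(y)−ε_i^L‖x−y‖); for all t,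 (g_t(x)≤g_t(y) ⟹ ⟨x_t^*,ν⟩≤0); and ⟨b*,ν⟩≤‖x−y‖. Then it is not the case that f_i^L(x)<f_i^L(y)−ε_i^U‖x−y‖ and f_i^U(x)<f_i^U(y)−ε_i^L‖x−y‖ for all i. -/
/-!
Pair the multiplier identity with `ν`. Since `ν` lies in the polar of `N`, the right-hand side
`⟪-ω, ν⟫` is nonnegative. On the left, complementary slackness makes every constraint term
nonpositive, `⟪b, ν⟫ ≤ ‖x - y‖` absorbs the `ε`-term, and if every `fL i`, `fU i` decreased
strictly, the contrapositives of `hL`, `hU` would make the objective part, weighted by the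
nontrivial multipliers `lamL`, `lamU`, strictly negative.
-/

open RealInnerProductSpace
open scoped BigOperators

theorem real_inner_finsum_smul_nonpos {E τ : Type*} [NormedAddCommGroup E] [InnerProductSpace ℝ E]
    {μ : τ → ℝ} {v : τ → E} {w : E} (hμ : ∀ t, 0 ≤ μ t) (hμfin : (Function.support μ).Finite)
    (hv : ∀ t, 0 < μ t → ⟪v t, w⟫ ≤ 0) :
    ⟪∑ᶠ t, μ t • v t, w⟫ ≤ 0 := by
  rw [finsum_eq_sum_of_support_subset _ (s := hμfin.toFinset)
    (by simpa using Function.support_smul_subset_left μ v), sum_inner]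
  refine Finset.sum_nonpos fun t ht => ?_
  rw [real_inner_smul_left]
  exact mul_nonpos_of_nonneg_of_nonpos (hμ t) (hv t ((hμ t).lt_of_ne' (by simpa using ht)))

theorem sum_mul_add_mul_neg {ι : Type*} [Fintype ι] {lamL lamU aL aU : ι → ℝ}
    (hlamL : ∀ i, 0 ≤ lamL i) (hlamU : ∀ i, 0 ≤ lamU i) (hpos : 0 < ∑ i, (lamL i + lamU i))
    (haL : ∀ i, aL i < 0) (haU : ∀ i, aU i < 0) :
    ∑ i, (lamL i * aL i + lamU i * aU i) < 0 := by
  obtain ⟨j, -, hj⟩ : ∃ j ∈ Finset.univ, (0 : ℝ) < lamL j + lamU j :=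
    Finset.exists_lt_of_sum_lt (by simpa using hpos)
  refine Finset.sum_neg' (fun i _ => ?_) ⟨j, Finset.mem_univ j, ?_⟩
  · exact add_nonpos (mul_nonpos_of_nonneg_of_nonpos (hlamL i) (haL i).le)
      (mul_nonpos_of_nonneg_of_nonpos (hlamU i) (haU i).le)
  · linarith [mul_neg_of_pos_of_neg hj (max_lt (haL j) (haU j)),
      mul_le_mul_of_nonneg_left (le_max_left (aL j) (aU j)) (hlamL j),
      mul_le_mul_of_nonneg_left (le_max_right (aL j) (aU j)) (hlamU j)]

theorem weak_duality_core_general {n m : ℕ} {τ : Type*}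
    (N : Set (EuclideanSpace ℝ (Fin n)))
    (x y : EuclideanSpace ℝ (Fin n))
    (fL fU : Fin m → EuclideanSpace ℝ (Fin n) → ℝ) (g : τ → EuclideanSpace ℝ (Fin n) → ℝ)
    (εL εU : Fin m → ℝ) (hε : ∀ i, 0 ≤ εL i ∧ εL i ≤ εU i)
    (lamL lamU : Fin m → ℝ) (hlamL : ∀ i, 0 ≤ lamL i) (hlamU : ∀ i, 0 ≤ lamU i)
    (hsum : ∑ i, (lamL i + lamU i) = 1)
    (μ : τ → ℝ) (hμ : ∀ t, 0 ≤ μ t) (hμfin : (Function.support μ).Finite)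
    (zL zU : Fin m → EuclideanSpace ℝ (Fin n)) (xt : τ → EuclideanSpace ℝ (Fin n))
    (b ω : EuclideanSpace ℝ (Fin n)) (hω : ω ∈ N)
    (heq : ∑ i, (lamL i • zL i + lamU i • zU i) + (∑ᶠ t, μ t • xt t)
        + (∑ i, (lamL i * εU i + lamU i * εL i)) • b = -ω)
    (hgx : ∀ t, g t x ≤ 0) (hμg : ∀ t, 0 ≤ μ t * g t y)
    (ν : EuclideanSpace ℝ (Fin n)) (hν : ∀ z ∈ N, ⟪z, ν⟫ ≤ 0)
    (hL : ∀ i, ⟪zL i, ν⟫ + εU i * ‖x - y‖ ≥ 0 → fL i x ≥ fL i y - εU i * ‖x - y‖)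
    (hU : ∀ i, ⟪zU i, ν⟫ + εL i * ‖x - y‖ ≥ 0 → fU i x ≥ fU i y - εL i * ‖x - y‖)
    (hg : ∀ t, g t x ≤ g t y → ⟪xt t, ν⟫ ≤ 0)
    (hbν : ⟪b, ν⟫ ≤ ‖x - y‖) :
    ¬ ∀ i, fL i x < fL i y - εU i * ‖x - y‖ ∧ fU i x < fU i y - εL i * ‖x - y‖ := by
  intro hdec
  have hzL i : ⟪zL i, ν⟫ + εU i * ‖x - y‖ < 0 := not_le.1 fun h => (hdec i).1.not_ge (hL i h)
  have hzU i : ⟪zU i, ν⟫ + εL i * ‖x - y‖ < 0 := not_le.1 fun h => (hdec i).2.not_ge (hU i h)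
  have hC : 0 ≤ ∑ i, (lamL i * εU i + lamU i * εL i) := Finset.sum_nonneg fun i _ =>
    add_nonneg (mul_nonneg (hlamL i) ((hε i).1.trans (hε i).2)) (mul_nonneg (hlamU i) (hε i).1)
  have hxt : ⟪∑ᶠ t, μ t • xt t, ν⟫ ≤ 0 := real_inner_finsum_smul_nonpos hμ hμfin fun t ht =>
    hg t ((hgx t).trans (nonneg_of_mul_nonneg_right (hμg t) ht))
  have := calc
    0 ≤ ⟪-ω, ν⟫ := by simpa [inner_neg_left] using hν ω hω
    _ = ∑ i, (lamL i * ⟪zL i, ν⟫ + lamU i * ⟪zU i, ν⟫) + ⟪∑ᶠ t, μ t • xt t, ν⟫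
          + (∑ i, (lamL i * εU i + lamU i * εL i)) * ⟪b, ν⟫ := by
      simp only [← heq, inner_add_left, sum_inner, real_inner_smul_left]
    _ ≤ ∑ i, (lamL i * ⟪zL i, ν⟫ + lamU i * ⟪zU i, ν⟫) + 0
          + (∑ i, (lamL i * εU i + lamU i * εL i)) * ‖x - y‖ := by gcongr
    _ = ∑ i, (lamL i * (⟪zL i, ν⟫ + εU i * ‖x - y‖) + lamU i * (⟪zU i, ν⟫ + εL i * ‖x - y‖)) := by
      rw [add_zero, Finset.sum_mul, ← Finset.sum_add_distrib]
      exact Finset.sum_congr rfl fun i _ => by ring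
  exact this.not_gt (sum_mul_add_mul_neg hlamL hlamU (hsum ▸ one_pos) hzL hzU)

/-- Computational core of the weak duality Theorem 4.1(i), abstract finite-dimensional form. -/
theorem weak_duality_core {n m : ℕ} {τ : Type*}
    (Ω N : Set (EuclideanSpace ℝ (Fin n)))
    (x y : EuclideanSpace ℝ (Fin n)) (hx : x ∈ Ω) (hy : y ∈ Ω)
    (fL fU : Fin m → EuclideanSpace ℝ (Fin n) → ℝ) (g : τ → EuclideanSpace ℝ (Fin n) → ℝ)
    (εL εU : Fin m → ℝ) (hε : ∀ i, 0 ≤ εL i ∧ εL i ≤ εU i)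
    (lamL lamU : Fin m → ℝ) (hlamL : ∀ i, 0 ≤ lamL i) (hlamU : ∀ i, 0 ≤ lamU i)
    (hsum : ∑ i, (lamL i + lamU i) = 1)
    (μ : τ → ℝ) (hμ : ∀ t, 0 ≤ μ t) (hμfin : (Function.support μ).Finite)
    (zL zU : Fin m → EuclideanSpace ℝ (Fin n)) (xt : τ → EuclideanSpace ℝ (Fin n))
    (b ω : EuclideanSpace ℝ (Fin n)) (hb : ‖b‖ ≤ 1) (hω : ω ∈ N)
    (heq : ∑ i, (lamL i • zL i + lamU i • zU i) + (∑ᶠ t, μ t • xt t)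
        + (∑ i, (lamL i * εU i + lamU i * εL i)) • b = -ω)
    (hgx : ∀ t, g t x ≤ 0) (hμg : ∀ t, 0 ≤ μ t * g t y)
    (ν : EuclideanSpace ℝ (Fin n)) (hν : ∀ z ∈ N, ⟪z, ν⟫ ≤ 0)
    (hL : ∀ i, ⟪zL i, ν⟫ + εU i * ‖x - y‖ ≥ 0 → fL i x ≥ fL i y - εU i * ‖x - y‖)
    (hU : ∀ i, ⟪zU i, ν⟫ + εL i * ‖x - y‖ ≥ 0 → fU i x ≥ fU i y - εL i * ‖x - y‖)
    (hg : ∀ t, g t x ≤ g t y → ⟪xt t, ν⟫ ≤ 0)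
    (hbν : ⟪b, ν⟫ ≤ ‖x - y‖) :
    ¬ ∀ i, fL i x < fL i y - εU i * ‖x - y‖ ∧ fU i x < fU i y - εL i * ‖x - y‖ :=
  weak_duality_core_general N x y fL fU g εL εU hε lamL lamU hlamL hlamU hsum μ hμ hμfin zL zU xt b
    ω hω heq hgx hμg ν hν hL hU hg hbν
end
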